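/- arXiv:2309.16102 — 2 statements merged into one kernel-verified Lean document; each statement's English description precedes it below -/
import Mathlib

section
/- Let r = X → Y be an interval rule and let r' = X → Y∪{E} be obtained from r by a right extension, i.e., by inserting one interval event E (with some chosen relations to the intervals of r) into the consequent. Then ant(r') = ant(r) and seq(r') ⊆ seq(r) (deleting the matched occurrence of E turns any occurrence of r' into an occurrence of r). Consequently, if ant(r) is nonempty, conf(r') ≤ conf(r); in particular, if conf(r) < minconf then conf(r') < minconf. -/
open scoped Classical

structure IEvent where
  label : ℕ
  st : ℝ
  ft : ℝ
  u : ℝ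

inductive Allen
  | before | meets | overlaps | finishedBy | contains | starts | equals
  deriving DecidableEq

noncomputable def allenRel (a b : IEvent) : Allen :=
  if a.ft < b.st then .before
  else if a.ft = b.st then .meets
  else if a.st < b.st then
    if a.ft < b.ft then .overlaps
    else if a.ft = b.ft then .finishedBy
    else .contains
  else if a.ft < b.ft then .starts
  else .equals

def occursAt (L S : List IEvent) (j : Fin L.length → Fin S.length) : Prop :=
  StrictMono j ∧
  (∀ k, (L.get k).label = (S.get (j k)).label) ∧
  ∀ a b : Fin L.length, a < b →
    allenRel (L.get a) (L.get b) = allenRel (S.get (j a)) (S.get (j b))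

def occursIn (L S : List IEvent) : Prop := ∃ j, occursAt L S j

structure IRule where
  X : List IEvent
  Y : List IEvent
  hX : X ≠ []
  hY : Y ≠ []

noncomputable def seqCount (D : List (List IEvent)) (L : List IEvent) : ℕ :=
  (D.filter (fun S => decide (occursIn L S))).length

noncomputable def seqUtility (S : List IEvent) : ℝ := (S.map IEvent.u).sum

lemma sublist_insertIdx' {α : Type*} : ∀ (n : ℕ) (a : α) (l : List α), List.Sublist l (l.insertIdx n a)
  | 0, a, l => List.sublist_cons_self a l
  | n+1, a, [] => List.Sublist.refl _
  | n+1, a, hd :: tl => by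
      rw [List.insertIdx_succ_cons]
      exact (sublist_insertIdx' n a tl).cons₂ hd

lemma occursIn_of_sublist {L L' S : List IEvent} (h : List.Sublist L L') (h' : occursIn L' S) :
    occursIn L S := by
  obtain ⟨f, hf⟩ := List.sublist_iff_exists_fin_orderEmbedding_get_eq.mp h
  obtain ⟨j, hmono, hlab, hrel⟩ := h'
  refine ⟨fun k => j (f k), hmono.comp f.strictMono, fun k => by rw [hf]; exact hlab (f k),
    fun a b hab => ?_⟩
  rw [hf, hf]
  exact hrel (f a) (f b) (f.strictMono hab)

/-- **Right extension does not increase confidence.**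
Let `r = X → Y` be an interval rule and let `r' = X → Y∪{E}` be obtained from `r` by a
right extension, i.e. by inserting one interval event `E` (at some position `p`, with
its relations to the intervals of `r` determined accordingly) into the consequent.
Then `ant(r') = ant(r)` and `seq(r') ⊆ seq(r)` (deleting the matched occurrence of `E`
turns any occurrence of `r'` into an occurrence of `r`).  Consequently, if `ant(r)` is
nonempty, `conf(r') ≤ conf(r)`; in particular, if `conf(r) < minconf` then
`conf(r') < minconf`. -/
theorem right_extension_confidence
    (D : List (List IEvent)) (r r' : IRule) (E : IEvent) (p : ℕ)
    (hX : r'.X = r.X) (hY : r'.Y = r.Y.insertIdx p E) :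
    (∀ S : List IEvent, occursIn (r'.X ++ r'.Y) S → occursIn (r.X ++ r.Y) S) ∧
    seqCount D r'.X = seqCount D r.X ∧
    seqCount D (r'.X ++ r'.Y) ≤ seqCount D (r.X ++ r.Y) ∧
    (0 < seqCount D r.X →
      (seqCount D (r'.X ++ r'.Y) : ℝ) / (seqCount D r'.X : ℝ) ≤
        (seqCount D (r.X ++ r.Y) : ℝ) / (seqCount D r.X : ℝ)) ∧
    (∀ minconf : ℝ, 0 < seqCount D r.X →
      (seqCount D (r.X ++ r.Y) : ℝ) / (seqCount D r.X : ℝ) < minconf →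
      (seqCount D (r'.X ++ r'.Y) : ℝ) / (seqCount D r'.X : ℝ) < minconf) := by
  have hsub : List.Sublist (r.X ++ r.Y) (r'.X ++ r'.Y) := by
    rw [hX, hY]
    exact (sublist_insertIdx' p E r.Y).append_left r.X
  have hocc : ∀ S : List IEvent, occursIn (r'.X ++ r'.Y) S → occursIn (r.X ++ r.Y) S :=
    fun S h => occursIn_of_sublist hsub h
  have hcount : seqCount D (r'.X ++ r'.Y) ≤ seqCount D (r.X ++ r.Y) := by
    unfold seqCount
    refine List.Sublist.length_le (List.monotone_filter_right D ?_)
    intro S h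
    simp only [decide_eq_true_eq] at h ⊢
    exact hocc S h
  have hant : seqCount D r'.X = seqCount D r.X := by rw [hX]
  have hle : ∀ _ : 0 < seqCount D r.X,
      (seqCount D (r'.X ++ r'.Y) : ℝ) / (seqCount D r'.X : ℝ) ≤
        (seqCount D (r.X ++ r.Y) : ℝ) / (seqCount D r.X : ℝ) := by
    intro hpos
    rw [hant]
    gcongr
  exact ⟨hocc, hant, hcount, hle, fun minconf hpos hlt => lt_of_le_of_lt (hle hpos) hlt⟩
end

section
/- Let D be an interval database, e a label, and let D' be obtained from D by deleting from every E-sequence all interval events with label e. Then for every interval rule r none of whose intervals has label e: an E-sequence S ∈ D contains an occurrence of r if and only if the corresponding reduced sequence S' ∈ D' contains an occurrence of r, and the matched intervals (hence their utilities and pairwise Allen relations) are the same. Consequently u_{D'}(r) = u_D(r), |seq_{D'}(r)| = |seq_D(r)|, |ant_{D'}(r)| = |ant_D(r)|, and conf_{D'}(r) = conf_D(r); in particular, removing an unpromising label e (one with SEU(e) < minutil) from D removes no utility-driven interval rule, since by the SEU bound every rule with u_D(r) ≥ minutil contains no interval with label e. -/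
open scoped Classical

/-- Delete from an E-sequence all interval events with label `e`; the remaining events,
their times, utilities, and relative order are unchanged. -/
def delLabel (e : ℕ) (S : List IEvent) : List IEvent :=
  S.filter (fun E => decide (E.label ≠ e))

/-- The sequence estimated utility of a label `e`:
`SEU(e) = Σ_{S ∈ D : S contains an interval event with label e} u(S)`. -/
noncomputable def SEU (D : List (List IEvent)) (e : ℕ) : ℝ :=
  ((D.filter (fun S => decide (∃ E ∈ S, E.label = e))).map seqUtility).sum

/-- The utility of a rule `r` in database `D` with respect to a fixed choice `occ` of
occurrences: `u(r) = Σ_{S ∈ seq(r)} u(r,S)`. -/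
noncomputable def ruleUtility (D : List (List IEvent)) (r : IRule)
    (occ : (S : List IEvent) → Fin (r.X ++ r.Y).length → Fin S.length) : ℝ :=
  ((D.filter (fun S => decide (occursIn (r.X ++ r.Y) S))).map
      (fun S => ∑ k, (S.get (occ S k)).u)).sum

section Aux

lemma countP_take_get (p : IEvent → Bool) :
    ∀ (S : List IEvent) (i : ℕ) (h : i < S.length), p (S.get ⟨i, h⟩) = true →
      ∃ h' : (S.take i).countP p < (S.filter p).length,
        (S.filter p).get ⟨(S.take i).countP p, h'⟩ = S.get ⟨i, h⟩ := by
  intro S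
  induction S with
  | nil => intro i h; simp at h
  | cons a t ih =>
    intro i h hp
    cases i with
    | zero =>
      simp only [List.get] at hp ⊢
      refine ⟨?_, ?_⟩ <;> simp [List.filter_cons, hp]
    | succ n =>
      simp only [List.get] at hp ⊢
      obtain ⟨h', heq⟩ := ih n (by simpa using h) hp
      simp only [List.get_eq_getElem] at heq
      by_cases hpa : p a = true
      · refine ⟨?_, ?_⟩ <;>
          simp [List.filter_cons, hpa, List.countP_cons, h', heq,
            List.get_eq_getElem]
      · refine ⟨?_, ?_⟩ <;>
          simp [List.filter_cons, hpa, List.countP_cons, h', heq,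
            List.get_eq_getElem]

lemma countP_take_lt (p : IEvent → Bool) (S : List IEvent) {i i' : ℕ}
    (hii : i < i') (h : i < S.length) (hp : p (S.get ⟨i, h⟩) = true) :
    (S.take i).countP p < (S.take i').countP p := by
  have h1 : (S.take (i + 1)).countP p = (S.take i).countP p + 1 := by
    rw [List.take_succ, List.getElem?_eq_getElem h, List.countP_append]
    simp only [List.get_eq_getElem] at hp
    simp [hp]
  have h2 : List.Sublist (S.take (i + 1)) (S.take i') := by
    have hsub := List.take_sublist (i + 1) (S.take i')
    rwa [List.take_take, Nat.min_eq_left hii] at hsub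
  have h3 : (S.take (i + 1)).countP p ≤ (S.take i').countP p := h2.countP_le
  omega

lemma occursAt_delLabel {e : ℕ} {L S : List IEvent} (hL : ∀ E ∈ L, E.label ≠ e)
    {j : Fin L.length → Fin S.length} (h : occursAt L S j) :
    ∃ j' : Fin L.length → Fin (delLabel e S).length,
      occursAt L (delLabel e S) j' ∧ ∀ k, (delLabel e S).get (j' k) = S.get (j k) := by
  obtain ⟨hmono, hlab, hallen⟩ := h
  set p : IEvent → Bool := fun E => decide (E.label ≠ e) with hpdef
  have hpk : ∀ k : Fin L.length, p (S.get (j k)) = true := by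
    intro k
    simp only [hpdef, decide_eq_true_eq]
    rw [← hlab k]
    exact hL _ (L.get_mem _)
  have haux : ∀ k : Fin L.length,
      ∃ h' : (S.take (j k)).countP p < (S.filter p).length,
        (S.filter p).get ⟨(S.take (j k)).countP p, h'⟩ = S.get (j k) := by
    intro k
    simpa using countP_take_get p S (j k) (j k).isLt (by simpa using hpk k)
  choose h' heq using haux
  refine ⟨fun k => ⟨(S.take (j k)).countP p, h' k⟩, ⟨?_, ?_, ?_⟩, fun k => heq k⟩
  · intro a b hab
    exact countP_take_lt p S (hmono hab) (j a).isLt (by simpa using hpk a)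
  · intro k
    have hk := hlab k
    rw [← heq k] at hk
    exact hk
  · intro a b hab
    have hab' := hallen a b hab
    rw [← heq a, ← heq b] at hab'
    exact hab'

lemma occursAt_of_delLabel {e : ℕ} {L S : List IEvent}
    {j' : Fin L.length → Fin (delLabel e S).length} (h : occursAt L (delLabel e S) j') :
    ∃ j : Fin L.length → Fin S.length,
      occursAt L S j ∧ ∀ k, S.get (j k) = (delLabel e S).get (j' k) := by
  obtain ⟨f, hf⟩ := List.sublist_iff_exists_fin_orderEmbedding_get_eq.mp
    (show List.Sublist (delLabel e S) S from List.filter_sublist)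
  obtain ⟨hmono, hlab, hallen⟩ := h
  refine ⟨fun k => f (j' k), ⟨fun a b hab => f.strictMono (hmono hab), ?_, ?_⟩,
    fun k => (hf _).symm⟩
  · intro k; rw [← hf]; exact hlab k
  · intro a b hab; rw [← hf, ← hf]; exact hallen a b hab

lemma occursIn_delLabel_iff {e : ℕ} {L S : List IEvent} (hL : ∀ E ∈ L, E.label ≠ e) :
    occursIn L (delLabel e S) ↔ occursIn L S := by
  constructor
  · rintro ⟨j', hj'⟩
    obtain ⟨j, hj, -⟩ := occursAt_of_delLabel hj'
    exact ⟨j, hj⟩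
  · rintro ⟨j, hj⟩
    obtain ⟨j', hj', -⟩ := occursAt_delLabel hL hj
    exact ⟨j', hj'⟩

lemma seqCount_delLabel (D : List (List IEvent)) (e : ℕ) (L : List IEvent)
    (hL : ∀ E ∈ L, E.label ≠ e) :
    seqCount (D.map (delLabel e)) L = seqCount D L := by
  unfold seqCount
  rw [List.filter_map, List.length_map]
  congr 1
  apply List.filter_congr
  intro S _
  simp only [Function.comp_apply]
  exact decide_eq_decide.mpr (occursIn_delLabel_iff hL)

lemma sum_map_filter' {α : Type*} (p : α → Bool) (f : α → ℝ) (l : List α) :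
    ((l.filter p).map f).sum = (l.map fun x => if p x = true then f x else 0).sum := by
  induction l with
  | nil => simp
  | cons a t ih =>
    by_cases hpa : p a = true <;> simp [List.filter_cons, hpa, ih]

lemma sum_get_le {S : List IEvent} (hu : ∀ E ∈ S, 0 ≤ E.u) {n : ℕ}
    (f : Fin n → Fin S.length) (hf : Function.Injective f) :
    ∑ k, (S.get (f k)).u ≤ seqUtility S := by
  have h1 : seqUtility S = ∑ i : Fin S.length, (S.get i).u := by
    unfold seqUtility
    conv_lhs => rw [← List.ofFn_get S]
    rw [List.map_ofFn, List.sum_ofFn]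
    rfl
  rw [h1]
  have h2 : (∑ k, (S.get (f k)).u) = ∑ i ∈ Finset.univ.image f, (S.get i).u :=
    (Finset.sum_image (f := fun i => (S.get i).u) (g := f)
      fun a _ b _ hab => hf hab).symm
  rw [h2]
  exact Finset.sum_le_sum_of_subset_of_nonneg (Finset.subset_univ _)
    (fun i _ _ => hu _ (S.get_mem _))

end Aux

/-- **Removing an unpromising label removes no utility-driven interval rule.**
Let `D` be an interval database (with nonnegative utilities), `e` a label, and let `D'`
be obtained from `D` by deleting from every E-sequence all interval events with label
`e`.  Then for every interval rule `r` none of whose intervals has label `e`: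
every occurrence of `r` in `S ∈ D` corresponds to an occurrence of `r` in the reduced
sequence with the *same* matched intervals (hence the same utilities and pairwise Allen
relations), and conversely; consequently `|seq_{D'}(r)| = |seq_D(r)|`,
`|ant_{D'}(r)| = |ant_D(r)|`, and `conf_{D'}(r) = conf_D(r)`.  Moreover, if
`SEU(e) < minutil` then every rule whose utility in `D` is at least `minutil` contains
no interval with label `e` (the SEU bound), so removing the unpromising label `e`
removes no utility-driven interval rule. -/
theorem unpromising_label_removal
    (D : List (List IEvent)) (e : ℕ) (minutil : ℝ)
    (hu : ∀ S ∈ D, ∀ E ∈ S, 0 ≤ E.u)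
    (r : IRule) (hr : ∀ E ∈ r.X ++ r.Y, E.label ≠ e) :
    (∀ (S : List IEvent) (j : Fin (r.X ++ r.Y).length → Fin S.length),
        occursAt (r.X ++ r.Y) S j →
          ∃ j' : Fin (r.X ++ r.Y).length → Fin (delLabel e S).length,
            occursAt (r.X ++ r.Y) (delLabel e S) j' ∧
              ∀ k, (delLabel e S).get (j' k) = S.get (j k)) ∧
    (∀ (S : List IEvent) (j' : Fin (r.X ++ r.Y).length → Fin (delLabel e S).length),
        occursAt (r.X ++ r.Y) (delLabel e S) j' →
          ∃ j : Fin (r.X ++ r.Y).length → Fin S.length,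
            occursAt (r.X ++ r.Y) S j ∧
              ∀ k, S.get (j k) = (delLabel e S).get (j' k)) ∧
    seqCount (D.map (delLabel e)) (r.X ++ r.Y) = seqCount D (r.X ++ r.Y) ∧
    seqCount (D.map (delLabel e)) r.X = seqCount D r.X ∧
    (seqCount (D.map (delLabel e)) (r.X ++ r.Y) : ℝ) /
        (seqCount (D.map (delLabel e)) r.X : ℝ) =
      (seqCount D (r.X ++ r.Y) : ℝ) / (seqCount D r.X : ℝ) ∧
    (SEU D e < minutil →
      ∀ (r0 : IRule)
        (occ : (S : List IEvent) → Fin (r0.X ++ r0.Y).length → Fin S.length),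
        (∀ S ∈ D, occursIn (r0.X ++ r0.Y) S → occursAt (r0.X ++ r0.Y) S (occ S)) →
        minutil ≤ ruleUtility D r0 occ → ∀ E ∈ r0.X ++ r0.Y, E.label ≠ e) := by
  have hrX : ∀ E ∈ r.X, E.label ≠ e := fun E hE => hr E (List.mem_append_left _ hE)
  refine ⟨?_, ?_, ?_, ?_, ?_, ?_⟩
  · intro S j hj; exact occursAt_delLabel hr hj
  · intro S j' hj'; exact occursAt_of_delLabel hj'
  · exact seqCount_delLabel D e _ hr
  · exact seqCount_delLabel D e _ hrX
  · rw [seqCount_delLabel D e _ hr, seqCount_delLabel D e _ hrX]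
  · intro hseu r0 occ hocc hmin E hE heq
    exfalso
    obtain ⟨k0, hk0⟩ := List.mem_iff_get.mp hE
    have key : ruleUtility D r0 occ ≤ SEU D e := by
      unfold ruleUtility SEU
      rw [sum_map_filter', sum_map_filter']
      apply List.sum_le_sum
      intro S hS
      simp only [decide_eq_true_eq]
      by_cases ho : occursIn (r0.X ++ r0.Y) S
      · obtain ⟨hm, hlab, -⟩ := hocc S hS ho
        have hasE : ∃ E' ∈ S, E'.label = e := by
          refine ⟨S.get (occ S k0), List.get_mem _ _, ?_⟩
          rw [← hlab k0, hk0]; exact heq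
        rw [if_pos ho, if_pos hasE]
        exact sum_get_le (hu S hS) (occ S) hm.injective
      · rw [if_neg ho]
        split
        · exact List.sum_nonneg (by
            intro x hx
            obtain ⟨E', hE', rfl⟩ := List.mem_map.mp hx
            exact hu S hS E' hE')
        · exact le_refl 0
    linarith
end
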